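/- arXiv:1602.04907 — 5 statements merged into one kernel-verified Lean document; each statement's English description precedes it below -/
import Mathlib

section
/- Let N ≥ 1 and k, m, n ∈ ℕ with n + m = N. In ℂ put a := exp(−πi/(N(k+N))), s := exp(πi/(k+N)), and v := exp(−πi·N/(k+N)). Then (−(a⁻¹·s))^(n·m + m·(m−1)) · (a⁻¹·v)^m = (−1)^((N−1)·m); in particular this scalar equals 1 when N is odd and equals (−1)^m when N is even. -/
open Complex

/-- `a = q^{-1/(2N)} = exp(-πi/(N(k+N)))` for `q = e^{2πi/(k+N)}`. -/
noncomputable def paramA (N k : ℕ) : ℂ :=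
  Complex.exp (-(Real.pi * Complex.I) / ((N : ℂ) * ((k : ℂ) + (N : ℂ))))

/-- `s = q^{1/2} = exp(πi/(k+N))`. -/
noncomputable def paramS (N k : ℕ) : ℂ :=
  Complex.exp (Real.pi * Complex.I / ((k : ℂ) + (N : ℂ)))

/-- `v = q^{-N/2} = exp(-πiN/(k+N))`. -/
noncomputable def paramV (N k : ℕ) : ℂ :=
  Complex.exp (-(Real.pi * Complex.I) * (N : ℂ) / ((k : ℂ) + (N : ℂ)))

lemma coupon_exp_aux (N k m : ℕ) (hN : 0 < N) :
    ((paramA N k)⁻¹ * paramS N k) ^ ((N - 1) * m) *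
      ((paramA N k)⁻¹ * paramV N k) ^ m = 1 := by
  have hd : ((k : ℂ) + (N : ℂ)) ≠ 0 := by
    have : ((k + N : ℕ) : ℂ) ≠ 0 := Nat.cast_ne_zero.mpr (by omega)
    push_cast at this; exact this
  have hNc : (N : ℂ) ≠ 0 := Nat.cast_ne_zero.mpr hN.ne'
  unfold paramA paramS paramV
  rw [← Complex.exp_neg, ← Complex.exp_add, ← Complex.exp_add,
    ← Complex.exp_nat_mul, ← Complex.exp_nat_mul, ← Complex.exp_add,
    show (((N - 1) * m : ℕ) : ℂ) = ((N : ℂ) - 1) * m by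
      push_cast [Nat.cast_sub hN]; ring]
  rw [show (((N : ℂ) - 1) * ↑m * (-(-(↑Real.pi * I) / (↑N * (↑k + ↑N))) + ↑Real.pi * I / (↑k + ↑N)) +
      ↑m * (-(-(↑Real.pi * I) / (↑N * (↑k + ↑N))) + -(↑Real.pi * I) * ↑N / (↑k + ↑N))) = 0 by
    field_simp; ring]
  exact Complex.exp_zero

/-- The concrete coupon scalar for quantum SU(N) at `q = e^{2πi/(k+N)}`:
`(-(a⁻¹·s))^(nm + m(m-1)) · (a⁻¹·v)^m = (-1)^((N-1)·m)`; in particular it is `1` for `N` odd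
and `(-1)^m` for `N` even. -/
theorem coupon_scalar_SU_N (N k m n : ℕ) (hN : 0 < N) (h : n + m = N) :
    (-((paramA N k)⁻¹ * paramS N k)) ^ (n * m + m * (m - 1)) *
        ((paramA N k)⁻¹ * paramV N k) ^ m = (-1 : ℂ) ^ ((N - 1) * m) ∧
    (Odd N → (-((paramA N k)⁻¹ * paramS N k)) ^ (n * m + m * (m - 1)) *
        ((paramA N k)⁻¹ * paramV N k) ^ m = 1) ∧
    (Even N → (-((paramA N k)⁻¹ * paramS N k)) ^ (n * m + m * (m - 1)) *
        ((paramA N k)⁻¹ * paramV N k) ^ m = (-1 : ℂ) ^ m) := by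
  have hE : n * m + m * (m - 1) = (N - 1) * m := by
    cases m with
    | zero => simp
    | succ m' => subst h; rw [show n + (m' + 1) - 1 = n + m' from by omega, show m' + 1 - 1 = m' from rfl]; ring
  have key : (-((paramA N k)⁻¹ * paramS N k)) ^ (n * m + m * (m - 1)) *
      ((paramA N k)⁻¹ * paramV N k) ^ m = (-1 : ℂ) ^ ((N - 1) * m) := by
    rw [hE, neg_pow, mul_assoc, coupon_exp_aux N k m hN, mul_one]
  refine ⟨key, fun hodd => ?_, fun heven => ?_⟩
  · rw [key]
    have h1 : Even (N - 1) := Nat.Odd.sub_odd hodd odd_one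
    exact Even.neg_one_pow (h1.mul_right m)
  · rw [key, pow_mul]
    have h1 : Odd (N - 1) := Nat.Even.sub_odd hN heven odd_one
    rw [h1.neg_one_pow]
end

section
/- Let K be a field in which every element has a square root, let I be a finite type, let σ : I → I be an involution, and let f : I → Kˣ be any function into the units of K. Then there exist functions α, γ : I → Kˣ such that for every i ∈ I: (α(i)·α(σ i))²·f(i)·f(σ i) = 1, γ(i) = (α(i)·α(σ i)·f(i))⁻¹, and γ(i)·γ(σ i) = 1. -/
/-! Take `α i` to be a square root of `(f i)⁻¹` in `Kˣ`, so that `α i ^ 2 * f i = 1`; then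
`(α i · α (σ i))² · f i · f (σ i)` is the product of two such ones, and, as `σ (σ i) = i`,
`γ i · γ (σ i)` is the inverse of that same product. -/

theorem Units.exists_mul_self_eq {M : Type*} [CommMonoid M] (hsq : ∀ x : M, ∃ y : M, y * y = x)
    (u : Mˣ) : ∃ v : Mˣ, v * v = u := by
  obtain ⟨y, hy⟩ := hsq u
  have hyu : IsUnit y := isUnit_of_mul_isUnit_left (hy ▸ u.isUnit)
  exact ⟨hyu.unit, Units.ext hy⟩

theorem mul_sq_mul_mul_eq_one {G : Type*} [CommGroup G] {a b x y : G}
    (ha : a * a * x = 1) (hb : b * b * y = 1) : (a * b) ^ 2 * x * y = 1 :=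
  calc (a * b) ^ 2 * x * y = (a * a * x) * (b * b * y) := by rw [mul_pow, sq, sq]; ac_rfl
    _ = 1 := by rw [ha, hb, one_mul]

theorem exists_quasi_isomorphism_scaling_general (K : Type*) [Field K]
    (hsq : ∀ x : K, ∃ y : K, y * y = x)
    (I : Type*) (σ : I → I) (hσ : Function.Involutive σ) (f : I → Kˣ) :
    ∃ α γ : I → Kˣ, ∀ i : I,
      (α i * α (σ i)) ^ 2 * f i * f (σ i) = 1 ∧
      γ i = (α i * α (σ i) * f i)⁻¹ ∧
      γ i * γ (σ i) = 1 := by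
  choose α hα using fun i => Units.exists_mul_self_eq hsq (f i)⁻¹
  have hαf : ∀ i, α i * α i * f i = 1 := fun i => by rw [hα, inv_mul_cancel]
  have key : ∀ i, (α i * α (σ i)) ^ 2 * f i * f (σ i) = 1 :=
    fun i => mul_sq_mul_mul_eq_one (hαf i) (hαf (σ i))
  refine ⟨α, fun i => (α i * α (σ i) * f i)⁻¹, fun i => ⟨key i, rfl, ?_⟩⟩
  calc (α i * α (σ i) * f i)⁻¹ * (α (σ i) * α (σ (σ i)) * f (σ i))⁻¹
      = ((α i * α (σ i)) ^ 2 * f i * f (σ i))⁻¹ := by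
        rw [hσ i, ← mul_inv, sq]; ac_rfl
    _ = 1 := by rw [key i, inv_one]

/-- Given any `f : I → Kˣ` over a field `K` with square roots and an involution `σ` of a finite
label set `I`, there are rescaling factors `α` and gluing discrepancies `γ` with
`(α i · α (σ i))² · f i · f (σ i) = 1`, `γ i = (α i · α (σ i) · f i)⁻¹` and `γ i · γ (σ i) = 1`. -/
theorem exists_quasi_isomorphism_scaling (K : Type*) [Field K]
    (hsq : ∀ x : K, ∃ y : K, y * y = x)
    (I : Type*) [Fintype I] (σ : I → I) (hσ : Function.Involutive σ) (f : I → Kˣ) :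
    ∃ α γ : I → Kˣ, ∀ i : I,
      (α i * α (σ i)) ^ 2 * f i * f (σ i) = 1 ∧
      γ i = (α i * α (σ i) * f i)⁻¹ ∧
      γ i * γ (σ i) = 1 :=
  exists_quasi_isomorphism_scaling_general K hsq I σ hσ f
end

section
/- Let K be a field in which every element has a square root, let I be a finite type, let σ : I → I be an involution, and let ν : I → Kˣ satisfy ν(i)·ν(σ i) = 1 for all i and ν(i) = 1 whenever σ i = i. Then there exists η : I → Kˣ with η(i)² = ν(i) and η(i)·η(σ i) = 1 for all i. -/
/-- Square roots `η` of `ν` can be chosen consistently so that `η i · η (σ i) = 1`, provided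
`ν i · ν (σ i) = 1` and `ν` is `1` on fixed points of the involution `σ`. -/
theorem exists_consistent_sqrt (K : Type*) [Field K]
    (hsq : ∀ x : K, ∃ y : K, y * y = x)
    (I : Type*) [Fintype I] (σ : I → I) (hσ : Function.Involutive σ)
    (ν : I → Kˣ) (hν : ∀ i, ν i * ν (σ i) = 1) (hfix : ∀ i, σ i = i → ν i = 1) :
    ∃ η : I → Kˣ, ∀ i : I, η i ^ 2 = ν i ∧ η i * η (σ i) = 1 := by
  classical
  -- choose square roots as units
  have hsqu : ∀ x : Kˣ, ∃ u : Kˣ, u * u = x := by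
    intro x
    obtain ⟨y, hy⟩ := hsq (x : K)
    have hy0 : y ≠ 0 := by
      intro h
      apply x.ne_zero
      rw [← hy, h, mul_zero]
    exact ⟨Units.mk0 y hy0, Units.ext (by simp [hy])⟩
  choose y hy using hsqu
  let e := Fintype.equivFin I
  -- inverse relation between ν i and ν (σ i)
  have hinv : ∀ i, ν (σ i) = (ν i)⁻¹ := fun i => eq_inv_of_mul_eq_one_right (hν i)
  refine ⟨fun i => if e i ≤ e (σ i) then y (ν i) else (y (ν (σ i)))⁻¹, fun i => ?_⟩
  by_cases hfi : σ i = i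
  · simp only [hfi, le_refl, if_pos]
    constructor
    · rw [sq, hy, hfix i hfi]
    · rw [hy, hfix i hfi]
  · have hne : e i ≠ e (σ i) := fun h => hfi (e.injective h).symm
    rcases lt_or_gt_of_ne hne with h | h
    · have h1 : e i ≤ e (σ i) := le_of_lt h
      have h2 : ¬ e (σ i) ≤ e (σ (σ i)) := by rw [hσ i]; exact not_le_of_gt h
      simp only [h1, if_pos, h2, if_neg, not_false_iff]
      rw [hσ i]
      exact ⟨by rw [sq, hy], mul_inv_cancel _⟩
    · have h1 : ¬ e i ≤ e (σ i) := not_le_of_gt h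
      have h2 : e (σ i) ≤ e (σ (σ i)) := by rw [hσ i]; exact le_of_lt h
      simp only [h1, if_neg, not_false_iff, h2, if_pos]
      constructor
      · rw [inv_pow, sq, hy, hinv, inv_inv]
      · rw [inv_mul_cancel]
end

section
/- Let K be a field in which every element has a square root, let I be a finite type, let σ : I → I be an involution, let d : I → Kˣ satisfy d(σ i) = d(i) for all i, and let μ̃ : I → Kˣ satisfy μ̃(i)·μ̃(σ i) = 1 for all i and μ̃(i)² = 1 whenever σ i = i. Then there exist u, w : I → Kˣ such that for every i ∈ I: u(i)³·u(σ i) = w(i)³·w(σ i)·d(i), and u(i) = μ̃(i)·u(σ i) whenever σ i ≠ i. -/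
/-- The algebraic core of strict self-duality from a fundamental symplectic character: there
exist scalings `u, w` with `u i³ · u (σ i) = w i³ · w (σ i) · d i` for all `i`, and
`u i = μ̃ i · u (σ i)` for every non-self-dual `i`. -/
theorem exists_strict_selfdual_scaling (K : Type*) [Field K]
    (hsq : ∀ x : K, ∃ y : K, y * y = x)
    (I : Type*) [Fintype I] (σ : I → I) (hσ : Function.Involutive σ)
    (d : I → Kˣ) (hd : ∀ i, d (σ i) = d i)
    (μt : I → Kˣ) (hμ : ∀ i, μt i * μt (σ i) = 1) (hfix : ∀ i, σ i = i → μt i ^ 2 = 1) :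
    ∃ u w : I → Kˣ, ∀ i : I,
      u i ^ 3 * u (σ i) = w i ^ 3 * w (σ i) * d i ∧
      (σ i ≠ i → u i = μt i * u (σ i)) := by
  classical
  -- every unit has a fourth root
  have h4 : ∀ x : Kˣ, ∃ z : Kˣ, z ^ 4 = x := by
    intro x
    obtain ⟨y, hy⟩ := hsq x
    have hy0 : y ≠ 0 := by
      intro h; apply x.ne_zero; rw [← hy, h, mul_zero]
    obtain ⟨z, hz⟩ := hsq y
    have hz0 : z ≠ 0 := by
      intro h; apply hy0; rw [← hz, h, mul_zero]
    refine ⟨Units.mk0 z hz0, ?_⟩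
    ext
    push_cast
    calc z ^ 4 = (z * z) * (z * z) := by ring
      _ = y * y := by rw [hz]
      _ = x := hy
  set t : I → Kˣ := fun i => Classical.choose (h4 (d i)⁻¹) with htdef
  have ht : ∀ i, t i ^ 4 = (d i)⁻¹ := fun i => Classical.choose_spec (h4 (d i)⁻¹)
  have hts : ∀ i, t (σ i) = t i := by
    intro i
    simp only [htdef, hd i]
  let e := Fintype.equivFin I
  set u : I → Kˣ := fun i => if e i ≤ e (σ i) then 1 else μt i with hudef
  refine ⟨u, fun i => u i * t i, fun i => ?_⟩
  constructor
  · show u i ^ 3 * u (σ i) = (u i * t i) ^ 3 * (u (σ i) * t (σ i)) * d i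
    rw [hts i]
    apply Units.ext
    have h1 : (t i : K) ^ 4 * (d i : K) = 1 := by
      have := congrArg (Units.val) (ht i)
      push_cast at this
      rw [this]
      exact inv_mul_cancel₀ (d i).ne_zero
    push_cast
    linear_combination (-(u i : K) ^ 3 * (u (σ i) : K)) * h1
  · intro hne
    have hee : e i ≠ e (σ i) := fun h => hne (e.injective h).symm
    by_cases hle : e i ≤ e (σ i)
    · have h2 : ¬ e (σ i) ≤ e i := fun h => hee (le_antisymm hle h)
      simp only [hudef, hσ i]
      rw [if_pos hle, if_neg h2]
      exact (hμ i).symm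
    · have h2 : e (σ i) ≤ e i := le_of_not_ge hle
      simp only [hudef, hσ i]
      rw [if_neg hle, if_pos h2, mul_one]
end

section
/- Let K be a field in which every element has a square root, let I be a finite type, let σ : I → I be an involution, and let u, u′ : I → Kˣ satisfy u(σ i) = u(i) and u′(σ i) = u′(i) for all i. Then there exists α : I → Kˣ such that α(i)·α(σ i) = u(i)/u′(i) for every i ∈ I. -/
/-- Uniqueness step of the canonical symplectic scaling: for any two `σ`-invariant scalings
`u, u'` there is `α : I → Kˣ` with `α i · α (σ i) = u i / u' i`. -/
theorem exists_rescaling_between_solutions (K : Type*) [Field K]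
    (hsq : ∀ x : K, ∃ y : K, y * y = x)
    (I : Type*) [Fintype I] (σ : I → I) (hσ : Function.Involutive σ)
    (u u' : I → Kˣ) (hu : ∀ i, u (σ i) = u i) (hu' : ∀ i, u' (σ i) = u' i) :
    ∃ α : I → Kˣ, ∀ i : I, α i * α (σ i) = u i / u' i := by
  choose s hs using hsq
  have hne : ∀ i : I, s ((u i / u' i : Kˣ) : K) ≠ 0 := by
    intro i h
    have := hs ((u i / u' i : Kˣ) : K)
    rw [h, zero_mul] at this
    exact (u i / u' i).ne_zero this.symm
  refine ⟨fun i => Units.mk0 _ (hne i), fun i => ?_⟩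
  ext
  simp only [Units.val_mul, Units.val_mk0, hu, hu']
  exact hs _
end
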